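/- For all nonnegative integers n and positive integers k, Ch_n^{(k)} = Σ_{l=0}^{n} s(n,l) E_l^{(k)}, where s(n,l) are the signed Stirling numbers of the first kind and E_l^{(k)} are the Euler numbers of order k. -/

import Mathlib

open PowerSeries Finset

/-- Higher-order Changhee numbers of the first kind. -/
noncomputable def Ch (k n : ℕ) : ℚ := (-1/2)^n * n.factorial * ((n+k-1).choose n)

/-- Signed Stirling numbers of the first kind, via coefficients of the falling factorial. -/
noncomputable def stirling1 (n l : ℕ) : ℚ :=
  (∏ i ∈ Finset.range n, (Polynomial.X - (i : Polynomial ℚ))).coeff l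

/-- Stirling numbers of the second kind, via (e^t-1)^n = n! Σ S₂(m,n) t^m/m!. -/
noncomputable def stirling2 (m n : ℕ) : ℚ :=
  (m.factorial : ℚ) / n.factorial * PowerSeries.coeff (R := ℚ) m ((PowerSeries.exp ℚ - 1)^n)

/-- Higher-order Euler numbers, from (2/(e^t+1))^k. -/
noncomputable def EulerN (k l : ℕ) : ℚ :=
  l.factorial * PowerSeries.coeff (R := ℚ) l ((2 * (PowerSeries.exp ℚ + 1)⁻¹)^k)

/-- Higher-order Euler polynomials, from (2/(e^t+1))^k e^{xt}. -/
noncomputable def EulerP (k : ℕ) (x : ℚ) (l : ℕ) : ℚ :=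
  l.factorial * PowerSeries.coeff (R := ℚ) l
    ((2 * (PowerSeries.exp ℚ + 1)⁻¹)^k * PowerSeries.rescale x (PowerSeries.exp ℚ))

/-- Generalized binomial coefficient. -/
noncomputable def gbinom (x : ℚ) (m : ℕ) : ℚ := (∏ i ∈ Finset.range m, (x - i)) / m.factorial

/-- Binomial series (1+t)^x. -/
noncomputable def onePlusXPow (x : ℚ) : PowerSeries ℚ := PowerSeries.mk fun m => gbinom x m

/-- Higher-order Changhee polynomials of the first kind, from (2/(2+t))^k (1+t)^x. -/
noncomputable def ChP (k : ℕ) (x : ℚ) (n : ℕ) : ℚ :=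
  n.factorial * PowerSeries.coeff (R := ℚ) n
    ((2 * (2 + PowerSeries.X : PowerSeries ℚ)⁻¹)^k * onePlusXPow x)

/-- Higher-order Changhee numbers of the second kind, from (2/(2+t))^k (1+t)^k. -/
noncomputable def ChhN (k n : ℕ) : ℚ :=
  n.factorial * PowerSeries.coeff (R := ℚ) n
    ((2 * (2 + PowerSeries.X : PowerSeries ℚ)⁻¹)^k * (1 + PowerSeries.X)^k)

/-- Higher-order Changhee polynomials of the second kind, from (2/(2+t))^k (1+t)^{x+k}. -/
noncomputable def ChP2 (k : ℕ) (x : ℚ) (n : ℕ) : ℚ :=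
  n.factorial * PowerSeries.coeff (R := ℚ) n
    ((2 * (2 + PowerSeries.X : PowerSeries ℚ)⁻¹)^k * onePlusXPow (x + k))

/-! Under `t ↦ eᵗ - 1` the generating function `(2/(2+t))^k` of the numbers `Ch_j^{(k)} / j!`
becomes `(2/(eᵗ+1))^k`, so `E_l^{(k)} = Σ_j Ch_j^{(k)} / j! · l! [tˡ] (eᵗ-1)^j`, and
`l! [tˡ] (eᵗ-1)^j = Σ_i (-1)^(j-i) C(j,i) iˡ`. Pairing with `s(n,l)` turns `iˡ` into the falling
factorial `(i)ₙ`, which vanishes for `i < n`; hence for `j ≤ n` only `j = i = n` survives, with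
weight `n!`, and the coefficients with `j > n` never reach `tˡ` for `l ≤ n`. -/

namespace PowerSeries

theorem coeff_mk_one_pow {S : Type*} [CommRing S] (k j : ℕ) :
    coeff j ((mk 1 : S⟦X⟧) ^ k) = (j + k - 1).choose j := by
  cases k with
  | zero => cases j <;> simp [coeff_one]
  | succ d =>
    rw [mk_one_pow_eq_mk_choose_add, coeff_mk, ← add_assoc, add_tsub_cancel_right, add_comm,
      Nat.choose_symm_add]

theorem two_mul_inv_two_add_X : 2 * (2 + X : ℚ⟦X⟧)⁻¹ = rescale (-1/2 : ℚ) (mk 1) := by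
  have hc : constantCoeff (2 + X : ℚ⟦X⟧) ≠ 0 := by simp [map_ofNat]
  refine ((eq_mul_inv_iff_mul_eq hc).2 ?_).symm
  have h := congrArg (rescale (-1/2 : ℚ)) (mk_one_mul_one_sub_eq_one ℚ)
  rw [map_mul, map_sub, map_one, rescale_X] at h
  have h2 : (C (-1/2 : ℚ) : ℚ⟦X⟧) * 2 = -1 := by
    rw [← map_ofNat C 2, ← map_mul]; norm_num
  linear_combination 2 * h + rescale (-1/2 : ℚ) (mk 1) * X * h2

theorem coeff_pow_eq_zero_of_lt {R : Type*} [CommRing R] {a : R⟦X⟧} (ha : constantCoeff a = 0)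
    {l j : ℕ} (h : l < j) : coeff l (a ^ j) = 0 :=
  X_pow_dvd_iff.1 (pow_dvd_pow_of_dvd (X_dvd_iff.2 ha) j) l h

theorem coeff_subst_eq_sum_range {R : Type*} [CommRing R] {a : R⟦X⟧} (ha : constantCoeff a = 0)
    (f : R⟦X⟧) {l N : ℕ} (hl : l ≤ N) :
    coeff l (f.subst a) = ∑ j ∈ range (N + 1), coeff j f * coeff l (a ^ j) := by
  simp only [coeff_subst' (HasSubst.of_constantCoeff_zero' ha), smul_eq_mul]
  refine finsum_eq_sum_of_support_subset _ fun j hj => ?_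
  rw [coe_range, Set.mem_Iio, Nat.lt_succ_iff]
  by_contra! hNj
  exact hj (by simp [coeff_pow_eq_zero_of_lt ha (hl.trans_lt hNj)])

theorem subst_inv {K : Type*} [Field K] {a : K⟦X⟧} (ha : HasSubst a) {f : K⟦X⟧}
    (hf : constantCoeff f ≠ 0) : (f⁻¹).subst a = (f.subst a : K⟦X⟧)⁻¹ := by
  have h : (f⁻¹.subst a : K⟦X⟧) * f.subst a = 1 := by
    rw [← subst_mul ha, PowerSeries.inv_mul_cancel f hf, ← map_one (C (R := K)), subst_C]
    rfl
  have hc : constantCoeff (f.subst a : K⟦X⟧) ≠ 0 :=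
    right_ne_zero_of_mul_eq_one (by rw [← map_mul, h, map_one])
  exact (eq_inv_iff_mul_eq_one hc).2 h

theorem factorial_mul_coeff_exp_sub_one_pow (l j : ℕ) :
    (l.factorial : ℚ) * coeff l ((exp ℚ - 1) ^ j) =
      ∑ i ∈ range (j + 1), (-1 : ℚ) ^ (j - i) * j.choose i * (i : ℚ) ^ l := by
  rw [sub_eq_add_neg, add_pow, map_sum, mul_sum]
  refine sum_congr rfl fun i _ => ?_
  have hC : (-1 : ℚ⟦X⟧) ^ (j - i) * (j.choose i : ℚ⟦X⟧) = C ((-1 : ℚ) ^ (j - i) * j.choose i) := by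
    simp
  rw [exp_pow_eq_rescale_exp, mul_assoc, hC, coeff_mul_C, coeff_rescale, coeff_exp,
    Algebra.algebraMap_self, RingHom.id_apply]
  field_simp

end PowerSeries

theorem Ch_eq_factorial_mul_coeff (k n : ℕ) :
    Ch k n = n.factorial * coeff n ((2 * (2 + X : ℚ⟦X⟧)⁻¹) ^ k) := by
  rw [two_mul_inv_two_add_X, ← map_pow, coeff_rescale, coeff_mk_one_pow, Ch]
  ring

theorem subst_exp_sub_one_two_mul_inv_two_add_X_pow (k : ℕ) :
    ((2 * (2 + X : ℚ⟦X⟧)⁻¹) ^ k).subst (exp ℚ - 1) = (2 * (exp ℚ + 1)⁻¹) ^ k := by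
  have ha : HasSubst (exp ℚ - 1) := HasSubst.exp_sub_one
  have h2 : ((2 : ℚ⟦X⟧).subst (exp ℚ - 1) : ℚ⟦X⟧) = 2 := by
    rw [← map_ofNat C 2, subst_C]; rfl
  have hX : ((2 + X : ℚ⟦X⟧).subst (exp ℚ - 1) : ℚ⟦X⟧) = exp ℚ + 1 := by
    rw [subst_add ha, subst_X ha, h2]; ring
  rw [subst_pow ha, subst_mul ha, subst_inv ha (by simp [map_ofNat]), h2, hX]

theorem descPochhammer_eq_prod_range (R : Type*) [CommRing R] (n : ℕ) :
    descPochhammer R n = ∏ i ∈ range n, (Polynomial.X - (i : Polynomial R)) := by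
  induction n with
  | zero => simp
  | succ n ih => rw [descPochhammer_succ_right, ih, prod_range_succ]

theorem sum_stirling1_mul_pow (n : ℕ) (x : ℚ) :
    ∑ l ∈ range (n + 1), stirling1 n l * x ^ l = (descPochhammer ℚ n).eval x := by
  rw [Polynomial.eval_eq_sum_range, descPochhammer_natDegree, descPochhammer_eq_prod_range]
  rfl

theorem sum_alternating_choose_mul_descFactorial {j n : ℕ} (hj : j ≤ n) :
    ∑ i ∈ range (j + 1), (-1 : ℚ) ^ (j - i) * j.choose i * (i.descFactorial n : ℚ) =
      if j = n then (n.factorial : ℚ) else 0 := by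
  rw [sum_eq_single n]
  · rcases hj.eq_or_lt with rfl | hlt
    · simp [Nat.descFactorial_self]
    · simp [hlt.ne, Nat.choose_eq_zero_of_lt hlt]
  · intro i hi hin
    have hlt : i < n := by grind
    simp [Nat.descFactorial_eq_zero_iff_lt.2 hlt]
  · intro hn
    simp [Nat.choose_eq_zero_of_lt (by simpa using hn : j < n)]

theorem sum_stirling1_mul_factorial_mul_coeff_exp_sub_one_pow {j n : ℕ} (hj : j ≤ n) :
    ∑ l ∈ range (n + 1), stirling1 n l * (l.factorial * coeff l ((exp ℚ - 1) ^ j)) =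
      if j = n then (n.factorial : ℚ) else 0 := by
  simp_rw [factorial_mul_coeff_exp_sub_one_pow, mul_sum]
  rw [sum_comm, ← sum_alternating_choose_mul_descFactorial hj]
  refine sum_congr rfl fun i _ => ?_
  rw [← descPochhammer_eval_eq_descFactorial, ← sum_stirling1_mul_pow, mul_sum]
  exact sum_congr rfl fun l _ => by ring

theorem changhee_eq_stirling1_euler_general (n : ℕ) (k : ℕ) :
    Ch k n = ∑ l ∈ Finset.range (n+1), stirling1 n l * EulerN k l := by
  set G : ℚ⟦X⟧ := (2 * (2 + X : ℚ⟦X⟧)⁻¹) ^ k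
  have hEuler : ∀ l ∈ range (n + 1), EulerN k l =
      ∑ j ∈ range (n + 1), coeff j G * (l.factorial * coeff l ((exp ℚ - 1) ^ j)) := by
    intro l hl
    rw [EulerN, ← subst_exp_sub_one_two_mul_inv_two_add_X_pow,
      coeff_subst_eq_sum_range (by simp [constantCoeff_exp]) _ (mem_range_succ_iff.1 hl), mul_sum]
    exact sum_congr rfl fun j _ => by ring
  calc Ch k n = ∑ j ∈ range (n + 1), coeff j G * if j = n then (n.factorial : ℚ) else 0 := by
        rw [Ch_eq_factorial_mul_coeff, mul_comm]
        simp_rw [mul_ite, mul_zero]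
        rw [sum_ite_eq', if_pos (self_mem_range_succ n)]
    _ = ∑ j ∈ range (n + 1), coeff j G *
          ∑ l ∈ range (n + 1), stirling1 n l * (l.factorial * coeff l ((exp ℚ - 1) ^ j)) :=
        sum_congr rfl fun j hj => by
          rw [sum_stirling1_mul_factorial_mul_coeff_exp_sub_one_pow (mem_range_succ_iff.1 hj)]
    _ = ∑ l ∈ range (n + 1), stirling1 n l * EulerN k l := by
        simp_rw [mul_sum]
        rw [sum_comm]
        refine sum_congr rfl fun l hl => ?_
        rw [hEuler l hl, mul_sum]
        exact sum_congr rfl fun j _ => by ring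

theorem changhee_eq_stirling1_euler (n : ℕ) (k : ℕ) (hk : 0 < k) :
    Ch k n = ∑ l ∈ Finset.range (n+1), stirling1 n l * EulerN k l :=
  changhee_eq_stirling1_euler_general n k
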